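/- Let p be a prime, X = (V, E, s, t) a finite connected directed multigraph with V nonempty, and n ≥ 1. Let X_n = X(ℤ/p^nℤ, α) be the derived graph for the constant voltage assignment α with value 1 ∈ ℤ/p^nℤ, and let U_n be the subgroup of ℤ/p^nℤ generated by the residues modulo p^n of the weights of all closed walks of X. Then the number of connected components of X_n equals the index [ℤ/p^nℤ : U_n]. -/

import Mathlib

/-- A directed multigraph: a vertex type `V`, an edge type `E`, and source/target maps. -/
structure DirMultigraph (V E : Type*) where
  s : E → V
  t : E → V

/-- The adjacency relation: there is an edge with source `x` and target `y`. -/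
def DirMultigraph.Adj {V E : Type*} (X : DirMultigraph V E) (x y : V) : Prop :=
  ∃ e, X.s e = x ∧ X.t e = y

/-- A directed multigraph is connected if any two vertices are related by the
reflexive-transitive-symmetric closure of the adjacency relation. -/
def DirMultigraph.Connected {V E : Type*} (X : DirMultigraph V E) : Prop :=
  ∀ x y : V, Relation.EqvGen X.Adj x y

/-- The set of connected components: the quotient of the vertex set by the
reflexive-transitive-symmetric closure of the adjacency relation. -/
def DirMultigraph.Components {V E : Type*} (X : DirMultigraph V E) : Type _ :=
  Quot X.Adj

/-- The derived graph `X(G, α)` of a voltage assignment `α : E → G`: vertices `V × G`,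
edges `E × G`, where the edge `(e, σ)` goes from `(s e, σ)` to `(t e, σ + α e)`. -/
def DirMultigraph.derived {V E G : Type*} [AddCommGroup G]
    (X : DirMultigraph V E) (α : E → G) : DirMultigraph (V × G) (E × G) where
  s := fun q => (X.s q.1, q.2)
  t := fun q => (X.t q.1, q.2 + α q.1)

/-- `WalkW X u v k` holds if there is a walk from `u` to `v` in which edges may be traversed
forwards or backwards, of weight `k` = (number of forwards steps) − (number of backwards
steps). -/
inductive DirMultigraph.WalkW {V E : Type*} (X : DirMultigraph V E) : V → V → ℤ → Prop
  | nil (v : V) : WalkW X v v 0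
  | fwd {u v w : V} {k : ℤ} (e : E) (h : WalkW X u v k) (hs : X.s e = v) (ht : X.t e = w) :
      WalkW X u w (k + 1)
  | bwd {u v w : V} {k : ℤ} (e : E) (h : WalkW X u v k) (ht : X.t e = v) (hs : X.s e = w) :
      WalkW X u w (k - 1)

/-!
Fix a base vertex `v₀` and, for every vertex `v`, a walk from `v₀` to `v` of weight `κ v`. The
vertex `(v, σ)` of the derived graph can reach exactly the vertices `(w, σ + k)` with `k` the
weight of a walk from `v` to `w`, so `(v, σ) ↦ σ - κ v` taken modulo the subgroup `U` of weights
of closed walks at `v₀` separates the components and identifies them with `R ⧸ U`. Conjugating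
a closed walk at any vertex by the chosen walks shows that `U` is the subgroup generated by the
weights of all closed walks.
-/

namespace DirMultigraph

variable {V E : Type*} {X : DirMultigraph V E}

namespace WalkW

lemma congr_weight {u v : V} {k l : ℤ} (h : X.WalkW u v k) (hkl : k = l) : X.WalkW u v l :=
  hkl ▸ h

lemma single {e : E} : X.WalkW (X.s e) (X.t e) 1 :=
  (fwd e (nil _) rfl rfl).congr_weight (zero_add 1)

lemma append {u v w : V} {k l : ℤ} (h₁ : X.WalkW u v k) (h₂ : X.WalkW v w l) :
    X.WalkW u w (k + l) := by
  induction h₂ with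
  | nil => simpa using h₁
  | fwd e _ hs ht ih => exact (fwd e ih hs ht).congr_weight (by ring)
  | bwd e _ ht hs ih => exact (bwd e ih ht hs).congr_weight (by ring)

lemma reverse {u v : V} {k : ℤ} (h : X.WalkW u v k) : X.WalkW v u (-k) := by
  induction h with
  | nil => exact nil _
  | fwd e _ hs ht ih => exact ((bwd e (nil _) ht hs).append ih).congr_weight (by ring)
  | bwd e _ ht hs ih => exact ((fwd e (nil _) hs ht).append ih).congr_weight (by ring)

end WalkW

lemma Connected.exists_walkW (hX : X.Connected) (u v : V) : ∃ k, X.WalkW u v k := by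
  induction hX u v with
  | rel _ _ h => obtain ⟨e, rfl, rfl⟩ := h; exact ⟨1, .single⟩
  | refl a => exact ⟨0, .nil a⟩
  | symm _ _ _ ih => obtain ⟨k, w⟩ := ih; exact ⟨-k, w.reverse⟩
  | trans _ _ _ _ _ ih₁ ih₂ =>
    obtain ⟨k, w₁⟩ := ih₁
    obtain ⟨l, w₂⟩ := ih₂
    exact ⟨k + l, w₁.append w₂⟩

variable (R : Type*) [AddCommGroupWithOne R]

def loopWeights (X : DirMultigraph V E) (v : V) : AddSubgroup R where
  carrier := {x | ∃ k : ℤ, X.WalkW v v k ∧ (k : R) = x}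
  zero_mem' := ⟨0, .nil v, Int.cast_zero⟩
  add_mem' := by
    rintro _ _ ⟨k, hk, rfl⟩ ⟨l, hl, rfl⟩
    exact ⟨k + l, hk.append hl, Int.cast_add k l⟩
  neg_mem' := by
    rintro _ ⟨k, hk, rfl⟩
    exact ⟨-k, hk.reverse, Int.cast_neg k⟩

variable {R}

lemma mem_loopWeights {v : V} {x : R} :
    x ∈ X.loopWeights R v ↔ ∃ k : ℤ, X.WalkW v v k ∧ (k : R) = x :=
  Iff.rfl

lemma Connected.closure_eq_loopWeights (hX : X.Connected) (v₀ : V) :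
    AddSubgroup.closure {x : R | ∃ k : ℤ, (∃ v : V, X.WalkW v v k) ∧ (k : R) = x}
      = X.loopWeights R v₀ := by
  refine le_antisymm ((AddSubgroup.closure_le _).2 ?_) fun x hx => AddSubgroup.subset_closure ?_
  · rintro _ ⟨k, ⟨v, hv⟩, rfl⟩
    obtain ⟨l, hl⟩ := hX.exists_walkW v₀ v
    exact ⟨l + k + -l, (hl.append hv).append hl.reverse, by push_cast; abel⟩
  · obtain ⟨k, hk, rfl⟩ := hx
    exact ⟨k, ⟨v₀, hk⟩, rfl⟩

lemma eqvGen_derived_one_iff {u v : V} {σ τ : R} :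
    Relation.EqvGen (X.derived fun _ => (1 : R)).Adj (u, σ) (v, τ)
      ↔ ∃ k : ℤ, X.WalkW u v k ∧ τ = σ + k := by
  constructor
  · suffices ∀ a b : V × R, Relation.EqvGen (X.derived fun _ => (1 : R)).Adj a b →
        ∃ k : ℤ, X.WalkW a.1 b.1 k ∧ b.2 = a.2 + k from this _ _
    intro a b h
    induction h with
    | rel _ _ h =>
      obtain ⟨⟨e, σ⟩, rfl, rfl⟩ := h
      exact ⟨1, .single, by simp [derived]⟩
    | refl a => exact ⟨0, .nil _, by simp⟩
    | symm _ _ _ ih =>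
      obtain ⟨k, hk, h⟩ := ih
      exact ⟨-k, hk.reverse, by rw [h]; push_cast; abel⟩
    | trans _ _ _ _ _ ih₁ ih₂ =>
      obtain ⟨k, hk, h₁⟩ := ih₁
      obtain ⟨l, hl, h₂⟩ := ih₂
      exact ⟨k + l, hk.append hl, by rw [h₂, h₁]; push_cast; abel⟩
  · rintro ⟨k, hk, rfl⟩
    induction hk with
    | nil => simpa using Relation.EqvGen.refl _
    | @fwd _ _ k e _ hs ht ih =>
      refine ih.trans _ _ _ (.rel _ _ ⟨(e, σ + k), ?_, ?_⟩)
      · simp [derived, hs]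
      · simp [derived, ht, add_assoc]
    | @bwd _ _ k e _ ht hs ih =>
      refine ih.trans _ _ _ (.symm _ _ (.rel _ _ ⟨(e, σ + (k - 1 : ℤ)), ?_, ?_⟩))
      · simp [derived, hs]
      · simp [derived, ht, add_assoc]

variable (R) in
noncomputable def Connected.potential (hX : X.Connected) (v₀ : V) (q : V × R) :
    R ⧸ X.loopWeights R v₀ :=
  (q.2 - (hX.exists_walkW v₀ q.1).choose : R)

lemma Connected.potential_eq_potential_iff (hX : X.Connected) (v₀ : V) {a b : V × R} :
    hX.potential R v₀ a = hX.potential R v₀ b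
      ↔ Relation.EqvGen (X.derived fun _ => (1 : R)).Adj a b := by
  obtain ⟨u, σ⟩ := a
  obtain ⟨w, τ⟩ := b
  have hu := (hX.exists_walkW v₀ u).choose_spec
  have hw := (hX.exists_walkW v₀ w).choose_spec
  rw [potential, potential, QuotientAddGroup.eq, mem_loopWeights, eqvGen_derived_one_iff]
  constructor
  · rintro ⟨m, hm, hmx⟩
    refine ⟨_, (hu.reverse.append hm).append hw, ?_⟩
    push_cast
    rw [hmx]
    abel
  · rintro ⟨k, hk, rfl⟩
    exact ⟨_, (hu.append hk).append hw.reverse, by push_cast; abel⟩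

variable (R) in
noncomputable def Connected.componentsEquiv (hX : X.Connected) (v₀ : V) :
    (X.derived fun _ => (1 : R)).Components ≃ R ⧸ X.loopWeights R v₀ :=
  Equiv.ofBijective
    (Quot.lift (hX.potential R v₀) fun _ _ h =>
      (hX.potential_eq_potential_iff v₀).2 (.rel _ _ h))
    ⟨by
      rintro ⟨a⟩ ⟨b⟩ h
      exact Quot.eqvGen_sound ((hX.potential_eq_potential_iff v₀).1 h),
    by
      intro x
      obtain ⟨σ, rfl⟩ := QuotientAddGroup.mk_surjective x
      exact ⟨Quot.mk _ (v₀, σ + (hX.exists_walkW v₀ v₀).choose), by simp [potential]⟩⟩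

end DirMultigraph

theorem card_components_derived_eq_index_general {p : ℕ} {V E : Type*}
    [Nonempty V] (X : DirMultigraph V E) (hX : X.Connected)
    (n : ℕ) :
    Nat.card (X.derived (fun _ : E => (1 : ZMod (p ^ n)))).Components
      = (AddSubgroup.closure
          {x : ZMod (p ^ n) | ∃ k : ℤ, (∃ v : V, X.WalkW v v k) ∧ (k : ZMod (p ^ n)) = x}).index
    := by
  obtain ⟨v₀⟩ := ‹Nonempty V›
  rw [hX.closure_eq_loopWeights v₀, AddSubgroup.index]
  exact Nat.card_congr (hX.componentsEquiv _ v₀)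

/-- Let `X` be a finite connected directed multigraph, `Xₙ = X(ℤ/pⁿℤ, α)` the derived graph of
the constant voltage assignment with value `1`, and `Uₙ ≤ ℤ/pⁿℤ` the subgroup generated by the
residues mod `pⁿ` of the weights of all closed walks of `X`. Then the number of connected
components of `Xₙ` equals the index `[ℤ/pⁿℤ : Uₙ]`. -/
theorem card_components_derived_eq_index {p : ℕ} [Fact p.Prime] {V E : Type*}
    [Fintype V] [Fintype E] [Nonempty V] (X : DirMultigraph V E) (hX : X.Connected)
    (n : ℕ) (hn : 1 ≤ n) :
    Nat.card (X.derived (fun _ : E => (1 : ZMod (p ^ n)))).Components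
      = (AddSubgroup.closure
          {x : ZMod (p ^ n) | ∃ k : ℤ, (∃ v : V, X.WalkW v v k) ∧ (k : ZMod (p ^ n)) = x}).index :=
  card_components_derived_eq_index_general X hX n
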